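/- arXiv:2202.04993 — 9 statements merged into one kernel-verified Lean document; each statement's English description precedes it below -/
import Mathlib

section
/- Let Z be a zero forcing set for a graph G and let A be a real symmetric matrix whose graph is G. If x ∈ ker(A) and supp(x) ∩ Z = ∅, then x = 0. -/
open SimpleGraph

variable {V : Type*}

/-- One step of the standard zero forcing color-change rule: a blue vertex `u`
whose unique white neighbor is `v` forces `v` to become blue. -/
def zfStep (G : SimpleGraph V) (B : Set V) : Set V :=
  B ∪ {v | v ∉ B ∧ ∃ u ∈ B, G.Adj u v ∧ ∀ w, G.Adj u w → w ∉ B → w = v}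

/-- `S` is a zero forcing set: iterating the standard color-change rule from `S`
eventually colors every vertex blue. -/
def IsZeroForcingSet (G : SimpleGraph V) (S : Set V) : Prop :=
  (⋃ n, (zfStep G)^[n] S) = Set.univ

/-- The failed zero forcing number `F(G)`: the maximum cardinality of a set that
is not a zero forcing set. -/
noncomputable def failedZF (G : SimpleGraph V) : ℕ :=
  sSup {n | ∃ S : Set V, ¬ IsZeroForcingSet G S ∧ S.ncard = n}

/-- The zero forcing number `Z(G)`. -/
noncomputable def zfNumber (G : SimpleGraph V) : ℕ :=
  sInf {n | ∃ S : Set V, IsZeroForcingSet G S ∧ S.ncard = n}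

/-- One step of the positive semidefinite color-change rule. -/
def psdStep (G : SimpleGraph V) (B : Set V) : Set V :=
  B ∪ {v | ∃ (hv : v ∉ B), ∃ u ∈ B, G.Adj u v ∧
        ∀ (w : V) (hw : w ∉ B), G.Adj u w →
          (G.induce {x | x ∉ B}).Reachable ⟨w, hw⟩ ⟨v, hv⟩ → w = v}

/-- `S` is a positive semidefinite zero forcing set. -/
def IsPSDZeroForcingSet (G : SimpleGraph V) (S : Set V) : Prop :=
  (⋃ n, (psdStep G)^[n] S) = Set.univ

/-- The failed positive semidefinite zero forcing number `F₊(G)`. -/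
noncomputable def failedPSD (G : SimpleGraph V) : ℕ :=
  sSup {n | ∃ S : Set V, ¬ IsPSDZeroForcingSet G S ∧ S.ncard = n}

/-- The positive semidefinite zero forcing number `Z₊(G)`. -/
noncomputable def psdZFNumber (G : SimpleGraph V) : ℕ :=
  sInf {n | ∃ S : Set V, IsPSDZeroForcingSet G S ∧ S.ncard = n}

/-- If `Z` is a zero forcing set for the graph of a real symmetric matrix `A`,
`x ∈ ker A` and `supp(x) ∩ Z = ∅`, then `x = 0`. -/
theorem kernel_vector_vanishing_on_zeroForcingSet_eq_zero {n : ℕ}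
    (A : Matrix (Fin n) (Fin n) ℝ) (hA : A.IsSymm)
    (G : SimpleGraph (Fin n)) (hG : ∀ i j, G.Adj i j ↔ i ≠ j ∧ A i j ≠ 0)
    (Z : Set (Fin n)) (hZ : IsZeroForcingSet G Z)
    (x : Fin n → ℝ) (hx : A.mulVec x = 0) (hsupp : ∀ i ∈ Z, x i = 0) :
    x = 0 := by
  have key : ∀ k, ∀ i ∈ (zfStep G)^[k] Z, x i = 0 := by
    intro k
    induction k with
    | zero => simpa using hsupp
    | succ k ih =>
      intro i hi
      rw [Function.iterate_succ_apply'] at hi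
      rcases hi with hi | ⟨hiB, u, huB, hadj, huniq⟩
      · exact ih i hi
      · have hsum : (A.mulVec x) u = 0 := by rw [hx]; rfl
        rw [Matrix.mulVec, dotProduct] at hsum
        have hred : ∀ j, j ≠ i → A u j * x j = 0 := by
          intro j hj
          by_cases hxj : x j = 0
          · simp [hxj]
          by_cases hjB : j ∈ (zfStep G)^[k] Z
          · simp [ih j hjB]
          by_cases hju : j = u
          · simp [hju, ih u huB]
          have : A u j ≠ 0 → G.Adj u j := fun h => (hG u j).mpr ⟨Ne.symm hju, h⟩
          by_cases hAuj : A u j = 0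
          · simp [hAuj]
          · exact absurd (huniq j (this hAuj) hjB) hj
        have : ∑ j, A u j * x j = A u i * x i := by
          rw [Finset.sum_eq_single i]
          · exact fun j _ hj => hred j hj
          · simp
        rw [this] at hsum
        have hAui : A u i ≠ 0 := ((hG u i).mp hadj).2
        exact (mul_eq_zero.mp hsum).resolve_left hAui
  funext i
  have : i ∈ ⋃ m, (zfStep G)^[m] Z := hZ ▸ Set.mem_univ i
  rcases Set.mem_iUnion.mp this with ⟨m, hm⟩
  exact key m i hm
end

section
/- Let G be a disconnected finite simple graph with connected components G_1, ..., G_k. Then F(G) = |G| − min{|G_i| − F(G_i) : i = 1, ..., k}. -/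
open SimpleGraph

variable {V : Type*}

section ComponentAux

variable {G : SimpleGraph V}

lemma mem_supp_of_adj' {c : G.ConnectedComponent} {u v : V} (hu : u ∈ c.supp)
    (h : G.Adj u v) : v ∈ c.supp := by
  rw [SimpleGraph.ConnectedComponent.mem_supp_iff] at hu ⊢
  rw [← hu]
  exact SimpleGraph.ConnectedComponent.sound h.symm.reachable

lemma preimage_zfStep (c : G.ConnectedComponent) (B : Set V) :
    (Subtype.val ⁻¹' (zfStep G B) : Set c.supp) =
      zfStep (G.induce c.supp) (Subtype.val ⁻¹' B) := by
  ext ⟨v, hv⟩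
  simp only [zfStep, Set.mem_preimage, Set.mem_union, Set.mem_setOf_eq, comap_adj,
    Function.Embedding.coe_subtype]
  constructor
  · rintro (h | ⟨hvB, u, huB, hadj, hforce⟩)
    · exact Or.inl h
    · exact Or.inr ⟨hvB, ⟨u, mem_supp_of_adj' hv hadj.symm⟩, huB, hadj,
        fun w hw hwB => Subtype.ext (hforce w hw hwB)⟩
  · rintro (h | ⟨hvB, ⟨u, hu⟩, huB, hadj, hforce⟩)
    · exact Or.inl h
    · refine Or.inr ⟨hvB, u, huB, hadj, fun w hw hwB => ?_⟩
      exact congrArg Subtype.val (hforce ⟨w, mem_supp_of_adj' hu hw⟩ hw hwB)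

lemma preimage_zfStep_iterate (c : G.ConnectedComponent) (B : Set V) (n : ℕ) :
    (Subtype.val ⁻¹' ((zfStep G)^[n] B) : Set c.supp) =
      (zfStep (G.induce c.supp))^[n] (Subtype.val ⁻¹' B) := by
  induction n with
  | zero => rfl
  | succ n ih =>
      rw [Function.iterate_succ_apply', Function.iterate_succ_apply', ← ih, preimage_zfStep]

lemma preimage_iUnion_iterate (c : G.ConnectedComponent) (S : Set V) :
    (Subtype.val ⁻¹' (⋃ n, (zfStep G)^[n] S) : Set c.supp) =
      ⋃ n, (zfStep (G.induce c.supp))^[n] (Subtype.val ⁻¹' S) := by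
  rw [Set.preimage_iUnion]
  exact Set.iUnion_congr fun n => preimage_zfStep_iterate c S n

lemma isZFS_iff_components (G : SimpleGraph V) (S : Set V) :
    IsZeroForcingSet G S ↔ ∀ c : G.ConnectedComponent,
      IsZeroForcingSet (G.induce c.supp) (Subtype.val ⁻¹' S) := by
  constructor
  · intro h c
    unfold IsZeroForcingSet at h ⊢
    rw [← preimage_iUnion_iterate, h, Set.preimage_univ]
  · intro h
    unfold IsZeroForcingSet
    ext v
    simp only [Set.mem_univ, iff_true]
    have hc := h (G.connectedComponentMk v)
    unfold IsZeroForcingSet at hc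
    rw [← preimage_iUnion_iterate] at hc
    have hv : v ∈ (G.connectedComponentMk v).supp := rfl
    have : (⟨v, hv⟩ : (G.connectedComponentMk v).supp) ∈
        (Subtype.val ⁻¹' (⋃ n, (zfStep G)^[n] S) : Set (G.connectedComponentMk v).supp) := by
      rw [hc]; trivial
    exact this

lemma zfStep_empty (G : SimpleGraph V) : zfStep G ∅ = ∅ := by
  simp [zfStep]

lemma not_isZFS_empty (G : SimpleGraph V) [Nonempty V] :
    ¬ IsZeroForcingSet G (∅ : Set V) := by
  unfold IsZeroForcingSet
  have h : ∀ n, (zfStep G)^[n] (∅ : Set V) = ∅ := by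
    intro n
    induction n with
    | zero => rfl
    | succ n ih => rw [Function.iterate_succ_apply', ih, zfStep_empty]
  simp only [h, Set.iUnion_empty]
  exact (Set.empty_ne_univ)

lemma ncard_le_natCard {α : Type*} [Finite α] (S : Set α) : S.ncard ≤ Nat.card α := by
  rw [← Set.ncard_univ]
  exact Set.ncard_le_ncard (Set.subset_univ S) Set.finite_univ

lemma failedZF_bddAbove {W : Type*} [Finite W] (G : SimpleGraph W) :
    BddAbove {n | ∃ S : Set W, ¬ IsZeroForcingSet G S ∧ S.ncard = n} := by
  refine ⟨Nat.card W, fun n hn => ?_⟩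
  obtain ⟨S, -, rfl⟩ := hn
  exact ncard_le_natCard S

lemma failedZF_witness {W : Type*} [Finite W] [Nonempty W] (G : SimpleGraph W) :
    ∃ S : Set W, ¬ IsZeroForcingSet G S ∧ S.ncard = failedZF G := by
  have hne : {n | ∃ S : Set W, ¬ IsZeroForcingSet G S ∧ S.ncard = n}.Nonempty :=
    ⟨0, ∅, not_isZFS_empty G, by simp⟩
  exact Nat.sSup_mem hne (failedZF_bddAbove G)

lemma le_failedZF {W : Type*} [Finite W] (G : SimpleGraph W) {S : Set W}
    (hS : ¬ IsZeroForcingSet G S) : S.ncard ≤ failedZF G :=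
  le_csSup (failedZF_bddAbove G) ⟨S, hS, rfl⟩

end ComponentAux

/-- If `G` is a disconnected graph with connected components `G₁, …, G_k`, then
`F(G) = |G| − min {|Gᵢ| − F(Gᵢ)}`. -/
theorem failedZF_of_disconnected [Fintype V] [Nonempty V] (G : SimpleGraph V)
    (hG : ¬ G.Connected) :
    failedZF G = Fintype.card V -
      sInf (Set.range fun c : G.ConnectedComponent =>
        c.supp.ncard - failedZF (G.induce c.supp)) := by
  classical
  set f : G.ConnectedComponent → ℕ :=
    fun c => c.supp.ncard - failedZF (G.induce c.supp) with hf
  set m := sInf (Set.range f) with hm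
  have hsuppne : ∀ c : G.ConnectedComponent, Nonempty c.supp := by
    intro c
    refine c.ind fun v => ⟨⟨v, rfl⟩⟩
  haveI : Nonempty G.ConnectedComponent :=
    ⟨G.connectedComponentMk (Classical.arbitrary V)⟩
  have hcard : Nat.card V = Fintype.card V := Nat.card_eq_fintype_card
  have hsupp_card : ∀ c : G.ConnectedComponent, c.supp.ncard = Nat.card c.supp := by
    intro c; exact (Nat.card_coe_set_eq c.supp).symm
  have hF_le : ∀ c : G.ConnectedComponent, failedZF (G.induce c.supp) ≤ c.supp.ncard := by
    intro c
    haveI := hsuppne c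
    obtain ⟨T, hT, hTcard⟩ := failedZF_witness (G.induce c.supp)
    rw [← hTcard, hsupp_card]
    exact ncard_le_natCard T
  have hsupp_le : ∀ c : G.ConnectedComponent, c.supp.ncard ≤ Fintype.card V := by
    intro c
    rw [← hcard]; exact ncard_le_natCard _
  have hcomplncard : ∀ c : G.ConnectedComponent,
      (c.suppᶜ : Set V).ncard = Fintype.card V - c.supp.ncard := by
    intro c
    have := Set.ncard_add_ncard_compl c.supp (Set.toFinite _) (Set.toFinite _)
    omega
  obtain ⟨c₀, hc₀⟩ := Nat.sInf_mem (Set.range_nonempty f)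
  refine le_antisymm ?_ ?_
  · unfold failedZF
    refine csSup_le ⟨0, ∅, not_isZFS_empty G, by simp⟩ ?_
    rintro n ⟨S, hS, rfl⟩
    rw [isZFS_iff_components] at hS
    push_neg at hS
    obtain ⟨c, hc⟩ := hS
    haveI := hsuppne c
    have h1 : (Subtype.val ⁻¹' S : Set c.supp).ncard ≤ failedZF (G.induce c.supp) :=
      le_failedZF _ hc
    have h2 : (S ∩ c.supp).ncard = (Subtype.val ⁻¹' S : Set c.supp).ncard := by
      rw [← Set.ncard_image_of_injective _ Subtype.val_injective,
        Set.image_preimage_eq_inter_range, Subtype.range_coe]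
    have h3 : (S ∩ c.supp).ncard + (S \ c.supp).ncard = S.ncard :=
      Set.ncard_inter_add_ncard_diff_eq_ncard S c.supp (Set.toFinite _)
    have h4 : (S \ c.supp).ncard ≤ (c.suppᶜ : Set V).ncard :=
      Set.ncard_le_ncard (fun x hx => hx.2) (Set.toFinite _)
    have h5 : m ≤ f c := Nat.sInf_le ⟨c, rfl⟩
    have h6 := hF_le c
    have h7 := hsupp_le c
    have h8 := hcomplncard c
    simp only [hf] at h5
    omega
  · haveI := hsuppne c₀
    obtain ⟨T, hT, hTcard⟩ := failedZF_witness (G.induce c₀.supp)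
    set S₀ : Set V := (c₀.supp)ᶜ ∪ (Subtype.val '' T) with hS₀
    have hpre : (Subtype.val ⁻¹' S₀ : Set c₀.supp) = T := by
      rw [hS₀, Set.preimage_union, Set.preimage_image_eq T Subtype.val_injective]
      have he : (Subtype.val ⁻¹' (c₀.suppᶜ) : Set c₀.supp) = ∅ := by
        ext x
        simp [x.2]
      rw [he, Set.empty_union]
    have hfail : ¬ IsZeroForcingSet G S₀ := by
      rw [isZFS_iff_components]
      push_neg
      exact ⟨c₀, by rw [hpre]; exact hT⟩
    have hdisj : Disjoint (c₀.suppᶜ : Set V) (Subtype.val '' T) := by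
      refine Set.disjoint_left.mpr fun x hx hx' => ?_
      obtain ⟨y, -, rfl⟩ := hx'
      exact hx y.2
    have hcardS : S₀.ncard = (Fintype.card V - c₀.supp.ncard) + failedZF (G.induce c₀.supp) := by
      rw [hS₀, Set.ncard_union_eq hdisj (Set.toFinite _) (Set.toFinite _),
        Set.ncard_image_of_injective _ Subtype.val_injective, hTcard, hcomplncard c₀]
    have h := le_failedZF G hfail
    have h5 : f c₀ = m := hc₀
    simp only [hf] at h5
    have h6 := hF_le c₀
    have h7 := hsupp_le c₀
    omega
end

section
/- For the hypercube graph Q_n with n ≥ 3, the failed zero forcing number satisfies F(Q_n) ≥ 2^n − n. -/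
open SimpleGraph

variable {V : Type*}

/-- The hypercube `Qₙ`: vertices are binary `n`-tuples, adjacent iff they differ
in exactly one coordinate. -/
def hypercube (n : ℕ) : SimpleGraph (Fin n → Bool) where
  Adj x y := (Finset.univ.filter fun i => x i ≠ y i).card = 1
  symm := by
    constructor
    intro x y h
    rw [← h]
    congr 1
    ext i
    simp [ne_comm]
  loopless := by
    constructor
    intro x h
    simp at h

/-!
Take `B` to be the complement of the neighbourhood of a vertex `x` of `Qₙ`. Any path `x – v – u`
of length two in `Qₙ` flips two coordinates of `x` (or the same one twice), and flipping them in
the other order (or flipping any other coordinate, which needs `n ≥ 2`) gives a second middle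
vertex `w ≠ v`. Hence every blue vertex `u` with a white neighbour `v ∈ N(x)` has a second white
neighbour `w ∈ N(x)`, so no force is possible and `B`, of size `2ⁿ − n`, is a failed zero forcing
set.
-/

section ZeroForcing

variable {G : SimpleGraph V}

lemma zfStep_eq_self {B : Set V}
    (h : ∀ u ∈ B, ∀ v ∉ B, G.Adj u v → ∃ w ∉ B, G.Adj u w ∧ w ≠ v) :
    zfStep G B = B := by
  refine Set.union_eq_left.mpr ?_
  rintro v ⟨hv, u, hu, huv, hunique⟩
  obtain ⟨w, hw, huw, hwv⟩ := h u hu v hv huv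
  exact absurd (hunique w huw hw) hwv

lemma not_isZeroForcingSet_of_zfStep_eq_self {B : Set V} (h : zfStep G B = B)
    (hB : B ≠ Set.univ) : ¬ IsZeroForcingSet G B := by
  simpa only [IsZeroForcingSet, Function.iterate_fixed h, Set.iUnion_const] using hB

lemma ncard_le_failedZF [Finite V] {S : Set V} (h : ¬ IsZeroForcingSet G S) :
    S.ncard ≤ failedZF G := by
  refine le_csSup ⟨Nat.card V, ?_⟩ ⟨S, h, rfl⟩
  rintro _ ⟨T, -, rfl⟩
  exact Set.ncard_le_card T

lemma zfStep_compl_neighborSet {x : V}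
    (h : ∀ {u v}, G.Adj x v → G.Adj v u → ∃ w, G.Adj x w ∧ G.Adj w u ∧ w ≠ v) :
    zfStep G (G.neighborSet x)ᶜ = (G.neighborSet x)ᶜ := by
  refine zfStep_eq_self fun u _ v hv huv => ?_
  obtain ⟨w, hxw, hwu, hwv⟩ := h (not_not.mp hv) huv.symm
  exact ⟨w, not_not.mpr hxw, hwu.symm, hwv⟩

lemma card_sub_ncard_neighborSet_le_failedZF [Finite V] {x : V}
    (hx : (G.neighborSet x).Nonempty)
    (h : ∀ {u v}, G.Adj x v → G.Adj v u → ∃ w, G.Adj x w ∧ G.Adj w u ∧ w ≠ v) :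
    Nat.card V - (G.neighborSet x).ncard ≤ failedZF G := by
  rw [← Set.ncard_compl]
  refine ncard_le_failedZF (not_isZeroForcingSet_of_zfStep_eq_self
    (zfStep_compl_neighborSet h) fun hcompl => ?_)
  obtain ⟨v, hv⟩ := hx
  exact (Set.eq_univ_iff_forall.mp hcompl v) hv

end ZeroForcing

namespace hypercube

variable {n : ℕ}

def flip (x : Fin n → Bool) (i : Fin n) : Fin n → Bool :=
  Function.update x i (!x i)

lemma flip_apply_of_ne {x : Fin n → Bool} {i j : Fin n} (h : j ≠ i) : flip x i j = x j :=
  Function.update_of_ne h _ x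

lemma flip_flip_self (x : Fin n → Bool) (i : Fin n) : flip (flip x i) i = x := by
  simp [flip]

lemma flip_flip_comm (x : Fin n → Bool) (i j : Fin n) :
    flip (flip x i) j = flip (flip x j) i := by
  rcases eq_or_ne i j with rfl | hij
  · rfl
  · rw [flip, flip_apply_of_ne hij.symm, flip, flip, flip_apply_of_ne hij, flip]
    exact Function.update_comm hij _ _ x

lemma flip_injective (x : Fin n → Bool) : Function.Injective (flip x) := by
  intro i j h
  by_contra hij
  have := congrFun h i
  rw [flip_apply_of_ne hij] at this
  simp [flip] at this

lemma adj_iff {x y : Fin n → Bool} : (hypercube n).Adj x y ↔ ∃ i, y = flip x i := by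
  change (Finset.univ.filter fun i => x i ≠ y i).card = 1 ↔ _
  rw [Finset.card_eq_one]
  refine exists_congr fun i => ⟨fun h => funext fun j => ?_, ?_⟩
  · have hj := Finset.ext_iff.mp h j
    simp only [Finset.mem_filter, Finset.mem_univ, true_and, Finset.mem_singleton] at hj
    rcases eq_or_ne j i with rfl | hji
    · simpa [flip, Bool.eq_not_iff, eq_comm] using hj.mpr rfl
    · rw [flip_apply_of_ne hji]
      exact (not_not.mp (mt hj.mp hji)).symm
  · rintro rfl
    ext j
    simp only [Finset.mem_filter, Finset.mem_univ, true_and, Finset.mem_singleton]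
    rcases eq_or_ne j i with rfl | hji
    · simp [flip]
    · simp [flip_apply_of_ne hji, hji]

lemma neighborSet_eq_range (x : Fin n → Bool) :
    (hypercube n).neighborSet x = Set.range (flip x) := by
  ext y
  simp [adj_iff, eq_comm]

lemma ncard_neighborSet (x : Fin n → Bool) : ((hypercube n).neighborSet x).ncard = n := by
  rw [neighborSet_eq_range, Set.ncard_range_of_injective (flip_injective x),
    Nat.card_eq_fintype_card, Fintype.card_fin]

lemma exists_adj_adj_ne (hn : 2 ≤ n) {x u v : Fin n → Bool} (hxv : (hypercube n).Adj x v)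
    (hvu : (hypercube n).Adj v u) :
    ∃ w, (hypercube n).Adj x w ∧ (hypercube n).Adj w u ∧ w ≠ v := by
  obtain ⟨i, rfl⟩ := adj_iff.mp hxv
  obtain ⟨j, rfl⟩ := adj_iff.mp hvu
  rcases eq_or_ne j i with rfl | hji
  · obtain ⟨k, hk⟩ := Fintype.exists_ne_of_one_lt_card (by rw [Fintype.card_fin]; omega) j
    refine ⟨flip x k, adj_iff.mpr ⟨k, rfl⟩, ?_, (flip_injective x).ne hk⟩
    rw [flip_flip_self]
    exact (adj_iff.mpr ⟨k, rfl⟩).symm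
  · refine ⟨flip x j, adj_iff.mpr ⟨j, rfl⟩, adj_iff.mpr ⟨i, flip_flip_comm x i j⟩,
      (flip_injective x).ne hji⟩

end hypercube

/-- For `n ≥ 3`, `F(Qₙ) ≥ 2ⁿ − n`. -/
theorem failedZF_hypercube (n : ℕ) (hn : 3 ≤ n) :
    2 ^ n - n ≤ failedZF (hypercube n) := by
  let x : Fin n → Bool := fun _ => false
  have hx : ((hypercube n).neighborSet x).Nonempty :=
    ⟨hypercube.flip x ⟨0, by omega⟩, hypercube.adj_iff.mpr ⟨_, rfl⟩⟩
  have h := card_sub_ncard_neighborSet_le_failedZF hx (hypercube.exists_adj_adj_ne (by omega))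
  simpa [hypercube.ncard_neighborSet] using h
end

section
/- For any finite simple graph G, Z_+(G) − 1 ≤ F_+(G) ≤ |G| − 1. -/
open SimpleGraph

variable {V : Type*}

namespace Set

variable {α : Type*} [Finite α]

/-- A set smaller than every set with property `P` lacks `P`, and such a set of size one less
than the minimum exists as soon as the minimum is positive. -/
theorem sInf_ncard_sub_one_le_sSup_ncard_not (P : Set α → Prop) :
    sInf {n | ∃ S, P S ∧ S.ncard = n} - 1 ≤ sSup {n | ∃ S, ¬ P S ∧ S.ncard = n} := by
  set m := sInf {n | ∃ S, P S ∧ S.ncard = n}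
  rcases Nat.eq_zero_or_pos m with hm | hm
  · simp [hm]
  obtain ⟨T, -, hT⟩ : m ∈ _ := Nat.sInf_mem (Nat.nonempty_of_pos_sInf hm)
  have hm_le : m - 1 ≤ (univ : Set α).ncard := by
    rw [ncard_univ, ← hT]
    exact (Nat.sub_le _ _).trans (ncard_le_card T)
  obtain ⟨S, -, hS⟩ := exists_subset_card_eq hm_le
  have hS_not : ¬ P S := fun hP =>
    absurd (Nat.sInf_le ⟨S, hP, rfl⟩ : m ≤ S.ncard) (by omega)
  refine le_csSup ?_ ⟨S, hS_not, hS⟩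
  refine ⟨Nat.card α, ?_⟩
  rintro _ ⟨U, -, rfl⟩
  exact ncard_le_card U

theorem sSup_ncard_not_le_card_sub_one {P : Set α → Prop} (hP : P univ) :
    sSup {n | ∃ S, ¬ P S ∧ S.ncard = n} ≤ Nat.card α - 1 := by
  refine csSup_le' ?_
  rintro _ ⟨S, hS, rfl⟩
  have := ncard_lt_card fun h : S = univ => hS (h ▸ hP)
  omega

end Set

theorem isPSDZeroForcingSet_univ (G : SimpleGraph V) : IsPSDZeroForcingSet G Set.univ :=
  Set.eq_univ_of_univ_subset (Set.subset_iUnion (fun n => (psdStep G)^[n] Set.univ) 0)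

/-- For any finite simple graph `G`, `Z₊(G) − 1 ≤ F₊(G) ≤ |G| − 1`. -/
theorem psdZFNumber_sub_one_le_failedPSD_le [Fintype V] (G : SimpleGraph V) :
    psdZFNumber G - 1 ≤ failedPSD G ∧ failedPSD G ≤ Fintype.card V - 1 :=
  ⟨Set.sInf_ncard_sub_one_le_sSup_ncard_not (IsPSDZeroForcingSet G),
    Nat.card_eq_fintype_card (α := V) ▸
      Set.sSup_ncard_not_le_card_sub_one (isPSDZeroForcingSet_univ G)⟩
end

section
/- For a finite simple graph G on n vertices, F_+(G) = n − 1 if and only if G has an isolated vertex. -/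
open SimpleGraph

variable {V : Type*}

lemma psd_forcing_of_adj [Fintype V] (G : SimpleGraph V) {v u : V} (h : G.Adj v u) :
    IsPSDZeroForcingSet G {v}ᶜ := by
  have hstep : psdStep G ({v}ᶜ : Set V) = Set.univ := by
    apply Set.eq_univ_of_forall
    intro x
    by_cases hx : x = v
    · subst hx
      refine Or.inr ⟨by simp, u, by simp [h.ne'], h.symm, ?_⟩
      intro w hw _ _
      simpa using hw
    · exact Or.inl (by simp [hx])
  apply Set.eq_univ_of_forall
  intro x
  exact Set.mem_iUnion.mpr ⟨1, by simp [hstep]⟩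

lemma psd_not_forcing_of_isolated (G : SimpleGraph V) {v : V}
    (hiso : ∀ w, ¬ G.Adj v w) : ¬ IsPSDZeroForcingSet G {v}ᶜ := by
  have hstep : psdStep G ({v}ᶜ : Set V) = {v}ᶜ := by
    apply Set.union_eq_self_of_subset_right
    rintro x ⟨hv, u, hu, hadj, -⟩
    have hx : x = v := by simpa using hv
    subst hx
    exact absurd hadj.symm (hiso u)
  intro hf
  have : v ∈ (⋃ n, (psdStep G)^[n] ({v}ᶜ : Set V)) := hf ▸ Set.mem_univ v
  obtain ⟨n, hn⟩ := Set.mem_iUnion.mp this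
  rw [Function.iterate_fixed hstep n] at hn
  simp at hn

lemma compl_singleton_of_ncard [Fintype V] [Nonempty V] {S : Set V}
    (h : S.ncard = Fintype.card V - 1) (hne : S ≠ Set.univ) : ∃ v : V, S = {v}ᶜ := by
  have hc := Set.ncard_add_ncard_compl S
  rw [Nat.card_eq_fintype_card] at hc
  have hpos : 0 < Fintype.card V := Fintype.card_pos
  have hcompl : Sᶜ.ncard = 1 := by
    rcases Nat.lt_or_ge Sᶜ.ncard 1 with h1 | h1
    · interval_cases h' : Sᶜ.ncard
      · exact absurd (Set.compl_empty_iff.mp ((Set.ncard_eq_zero (Set.toFinite _)).mp h')) hne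
    · omega
  obtain ⟨v, hv⟩ := Set.ncard_eq_one.mp hcompl
  exact ⟨v, by rw [← compl_compl S, hv]⟩

lemma univ_forcing (G : SimpleGraph V) : IsPSDZeroForcingSet G (Set.univ : Set V) := by
  apply Set.eq_univ_of_forall
  intro x
  exact Set.mem_iUnion.mpr ⟨0, by simp⟩

/-- For a graph `G` on `n` vertices, `F₊(G) = n − 1` iff `G` has an isolated
vertex. -/
theorem failedPSD_eq_card_sub_one_iff [Fintype V] [Nonempty V] (G : SimpleGraph V) :
    failedPSD G = Fintype.card V - 1 ↔ ∃ v : V, ∀ w : V, ¬ G.Adj v w := by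
  constructor
  · intro h
    by_contra hiso
    push_neg at hiso
    -- card ≥ 2
    obtain ⟨v0⟩ := ‹Nonempty V›
    obtain ⟨w0, hw0⟩ := hiso v0
    have hcard2 : 2 ≤ Fintype.card V :=
      Fintype.one_lt_card_iff_nontrivial.mpr ⟨⟨v0, w0, hw0.ne⟩⟩
    set T := {n | ∃ S : Set V, ¬ IsPSDZeroForcingSet G S ∧ S.ncard = n} with hT
    have hbdd : BddAbove T := by
      refine ⟨Fintype.card V, ?_⟩
      rintro m ⟨S, -, rfl⟩
      calc S.ncard ≤ (Set.univ : Set V).ncard :=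
            Set.ncard_le_ncard (Set.subset_univ S) Set.finite_univ
        _ = Fintype.card V := by rw [Set.ncard_univ, Nat.card_eq_fintype_card]
    have hTne : T.Nonempty := by
      by_contra hemp
      rw [Set.not_nonempty_iff_eq_empty] at hemp
      rw [failedPSD, ← hT, hemp] at h
      simp at h
      omega
    have hmem : Fintype.card V - 1 ∈ T := h ▸ Nat.sSup_mem hTne hbdd
    obtain ⟨S, hSnf, hScard⟩ := hmem
    have hSne : S ≠ Set.univ := fun he => hSnf (he ▸ univ_forcing G)
    obtain ⟨v, rfl⟩ := compl_singleton_of_ncard hScard hSne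
    obtain ⟨w, hw⟩ := hiso v
    exact hSnf (psd_forcing_of_adj G hw)
  · rintro ⟨v, hv⟩
    have hmem : Fintype.card V - 1 ∈
        {n | ∃ S : Set V, ¬ IsPSDZeroForcingSet G S ∧ S.ncard = n} := by
      refine ⟨{v}ᶜ, psd_not_forcing_of_isolated G hv, ?_⟩
      have hc := Set.ncard_add_ncard_compl ({v}ᶜ : Set V)
      rw [Nat.card_eq_fintype_card, compl_compl, Set.ncard_singleton] at hc
      omega
    apply le_antisymm
    · apply csSup_le ⟨_, hmem⟩
      rintro m ⟨S, hSnf, rfl⟩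
      have hle : S.ncard ≤ Fintype.card V := by
        calc S.ncard ≤ (Set.univ : Set V).ncard :=
              Set.ncard_le_ncard (Set.subset_univ S) Set.finite_univ
          _ = Fintype.card V := by rw [Set.ncard_univ, Nat.card_eq_fintype_card]
      have hne : S.ncard ≠ Fintype.card V := by
        intro he
        have hc := Set.ncard_add_ncard_compl S
        rw [Nat.card_eq_fintype_card, he] at hc
        have : Sᶜ = ∅ := (Set.ncard_eq_zero (Set.toFinite _)).mp (by omega)
        exact hSnf (Set.compl_empty_iff.mp this ▸ univ_forcing G)
      omega
    · apply le_csSup ?_ hmem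
      refine ⟨Fintype.card V, ?_⟩
      rintro m ⟨S, -, rfl⟩
      calc S.ncard ≤ (Set.univ : Set V).ncard :=
            Set.ncard_le_ncard (Set.subset_univ S) Set.finite_univ
        _ = Fintype.card V := by rw [Set.ncard_univ, Nat.card_eq_fintype_card]
end

section
/- Let G be a finite simple graph on n vertices with a module X of order k > 1 such that the subgraph induced by X has a connected component with more than one vertex. Then F_+(G) ≥ n − k. -/
open SimpleGraph

variable {V : Type*}

/-- If `X` is a module of order `k > 1` in `G` whose induced subgraph has a
connected component with more than one vertex (equivalently, `X` contains two
adjacent vertices), then `F₊(G) ≥ n − k`. -/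
theorem failedPSD_ge_of_module [Fintype V] (G : SimpleGraph V) (X : Set V) (k : ℕ)
    (hk : 1 < k) (hcard : X.ncard = k)
    (hmod : ∀ x ∈ X, ∀ y ∈ X, ∀ z ∉ X, (G.Adj x z ↔ G.Adj y z))
    (hadj : ∃ u ∈ X, ∃ v ∈ X, G.Adj u v) :
    Fintype.card V - k ≤ failedPSD G := by
  obtain ⟨a, ha, b, hb, hab⟩ := hadj
  -- the component of `a` in the induced subgraph on `X`
  classical
  set C : Set V := {v | ∃ h : v ∈ X, (G.induce X).Reachable ⟨a, ha⟩ ⟨v, h⟩} with hC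
  have haC : a ∈ C := ⟨ha, Reachable.refl _⟩
  have hCX : C ⊆ X := fun v hv => hv.1
  -- every vertex of C has a neighbor in C distinct from itself
  have hnbr : ∀ v ∈ C, ∃ w ∈ C, w ≠ v ∧ G.Adj v w := by
    intro v hv
    obtain ⟨hvX, hreach⟩ := hv
    by_cases hva : v = a
    · subst hva
      exact ⟨b, ⟨hb, Reachable.refl _ |>.trans ((Adj.reachable (by exact hab : (G.induce X).Adj ⟨v, hvX⟩ ⟨b, hb⟩)))⟩, fun h => by subst h; exact hab.ne rfl, hab⟩
    · obtain ⟨p⟩ := hreach.symm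
      cases p with
      | nil => exact absurd rfl hva
      | cons h q =>
        rename_i x
        refine ⟨x.1, ⟨x.2, ?_⟩, ?_, h⟩
        · exact hreach.trans (Adj.reachable (by exact h))
        · intro hxv
          exact h.ne (Subtype.ext hxv.symm)
  -- the invariant: C stays white forever
  have hinv : ∀ n, ∀ v ∈ C, v ∉ (psdStep G)^[n] Xᶜ := by
    intro n
    induction n with
    | zero => intro v hv h; exact h (hCX hv)
    | succ n ih =>
      intro v hv hmem
      rw [Function.iterate_succ_apply'] at hmem
      set B := (psdStep G)^[n] Xᶜ with hB
      rcases hmem with hmem | hmem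
      · exact ih v hv hmem
      · obtain ⟨hvB, u, huB, huv, hforce⟩ := hmem
        obtain ⟨w, hwC, hwv, hvw⟩ := hnbr v hv
        by_cases huX : u ∈ X
        · -- u would be in C, contradicting u ∈ B
          refine ih u ⟨huX, ?_⟩ huB
          exact hv.2.trans (Adj.reachable (show (G.induce X).Adj ⟨v, hv.1⟩ ⟨u, huX⟩ from huv.symm))
        · -- u ∉ X: by the module property u is adjacent to w as well
          have huw : G.Adj u w := by
            have := hmod v (hCX hv) w (hCX hwC) u huX
            exact (this.mp huv.symm).symm
          have hwB : w ∉ B := ih w hwC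
          have := hforce w hwB huw (Adj.reachable (show (G.induce {x | x ∉ B}).Adj ⟨w, hwB⟩ ⟨v, hvB⟩ from hvw.symm))
          exact hwv this
  -- hence Xᶜ is not a PSD zero forcing set
  have hnotZF : ¬ IsPSDZeroForcingSet G Xᶜ := by
    intro h
    have : a ∈ (⋃ n, (psdStep G)^[n] Xᶜ) := by rw [h]; trivial
    obtain ⟨_, ⟨n, rfl⟩, hn⟩ := this
    exact hinv n a haC hn
  have hXfin : X.Finite := Set.toFinite X
  have hcardc : (Xᶜ).ncard = Fintype.card V - k := by
    have h1 : X.ncard + (Xᶜ).ncard = Fintype.card V := by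
      rw [← Nat.card_eq_fintype_card]
      exact Set.ncard_add_ncard_compl X
    omega
  have hmemset : Fintype.card V - k ∈ {n | ∃ S : Set V, ¬ IsPSDZeroForcingSet G S ∧ S.ncard = n} :=
    ⟨Xᶜ, hnotZF, hcardc⟩
  refine le_csSup ⟨Fintype.card V, ?_⟩ hmemset
  rintro m ⟨S, -, rfl⟩
  calc S.ncard ≤ (Set.univ : Set V).ncard := Set.ncard_le_ncard (Set.subset_univ S) Set.finite_univ
    _ = Fintype.card V := by rw [Set.ncard_univ, Nat.card_eq_fintype_card]
end

section
/- Let G be a connected finite simple graph on n vertices. Then F_+(G) = n − 2 if and only if G has a module consisting of two adjacent vertices. -/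
open SimpleGraph

variable {V : Type*}

lemma pair_cases {V : Type*} {u v w : V} (h : w ∉ ({u, v} : Set V)ᶜ) : w = u ∨ w = v := by
  have h2 : w ∈ ({u, v} : Set V) := Set.not_notMem.mp h
  simpa using h2

lemma no_edge_reachable {W : Type*} {H : SimpleGraph W}
    (h : ∀ a b, ¬ H.Adj a b) {a b : W} (hr : H.Reachable a b) : a = b := by
  obtain ⟨p⟩ := hr
  cases p with
  | nil => rfl
  | cons h' _ => exact absurd h' (h _ _)

lemma exists_adj_of_connected [Fintype V] {G : SimpleGraph V} (hG : G.Connected)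
    (hN : 1 < Fintype.card V) (y : V) : ∃ z, G.Adj y z := by
  have : Nontrivial V := Fintype.one_lt_card_iff_nontrivial.mp hN
  obtain ⟨z, hz⟩ := exists_ne y
  obtain ⟨p⟩ := hG.preconnected y z
  cases p with
  | nil => exact absurd rfl hz
  | cons h _ => exact ⟨_, h⟩

lemma psdStep_eq_univ {G : SimpleGraph V} (hN : ∀ y, ∃ z, G.Adj y z) (B : Set V)
    (hB : ∀ a b, a ∉ B → b ∉ B → a = b) : psdStep G B = Set.univ := by
  apply Set.eq_univ_of_forall
  intro z
  by_cases hz : z ∈ B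
  · exact Set.mem_union_left _ hz
  · refine Set.mem_union_right _ ⟨hz, ?_⟩
    obtain ⟨z', hadj⟩ := hN z
    have hz' : z' ∈ B := by
      by_contra hc
      exact hadj.ne (hB z z' hz hc)
    exact ⟨z', hz', hadj.symm, fun w hw _ _ => hB w z hw hz⟩

lemma forcing_of_iterate {G : SimpleGraph V} {S : Set V} (k : ℕ)
    (h : (psdStep G)^[k] S = Set.univ) : IsPSDZeroForcingSet G S := by
  apply Set.eq_univ_of_univ_subset
  rw [← h]
  exact Set.subset_iUnion (fun n => (psdStep G)^[n] S) k

lemma forcing_pair {G : SimpleGraph V}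
    (hN : ∀ y, ∃ z, G.Adj y z) {u v x : V} (huv : u ≠ v)
    (hxu : x ≠ u) (hxv : x ≠ v) (hadjxu : G.Adj x u)
    (hcond : ¬ G.Adj x v ∨ ¬ G.Adj u v) :
    IsPSDZeroForcingSet G ({u, v} : Set V)ᶜ := by
  have hu_mem : u ∈ psdStep G (({u, v} : Set V)ᶜ) := by
    refine Set.mem_union_right _ ⟨by simp, x, by simp [hxu, hxv], hadjxu, ?_⟩
    intro w hw hadjw hr
    have hw' : w = u ∨ w = v := pair_cases hw
    rcases hw' with hwu | hwv
    · exact hwu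
    · rcases hcond with h | h
      · exact absurd (hwv ▸ hadjw) h
      · have hnoedge : ∀ a b : {x | x ∉ (({u, v} : Set V)ᶜ : Set V)},
            ¬ (G.induce {x | x ∉ (({u, v} : Set V)ᶜ : Set V)}).Adj a b := by
          rintro ⟨a, ha⟩ ⟨b, hb⟩ hab
          have ha' : a = u ∨ a = v := pair_cases ha
          have hb' : b = u ∨ b = v := pair_cases hb
          have hab' : G.Adj a b := hab
          rcases ha' with rfl | rfl <;> rcases hb' with rfl | rfl
          · exact hab'.ne rfl
          · exact h hab'
          · exact h hab'.symm
          · exact hab'.ne rfl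
        exact Subtype.ext_iff.mp (no_edge_reachable hnoedge hr)
  apply forcing_of_iterate 2
  have h2 : psdStep G (psdStep G (({u, v} : Set V)ᶜ)) = Set.univ := by
    apply psdStep_eq_univ hN
    intro a b ha hb
    have hsub : (({u, v} : Set V)ᶜ : Set V) ⊆ psdStep G (({u, v} : Set V)ᶜ) :=
      Set.subset_union_left
    have ha' : a = v := by
      have h1 : a ∉ (({u, v} : Set V)ᶜ : Set V) := fun hh => ha (hsub hh)
      have h2 : a = u ∨ a = v := pair_cases h1
      rcases h2 with rfl | rfl
      · exact absurd hu_mem ha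
      · rfl
    have hb' : b = v := by
      have h1 : b ∉ (({u, v} : Set V)ᶜ : Set V) := fun hh => hb (hsub hh)
      have h2 : b = u ∨ b = v := pair_cases h1
      rcases h2 with rfl | rfl
      · exact absurd hu_mem hb
      · rfl
    rw [ha', hb']
  show psdStep G (psdStep G (({u, v} : Set V)ᶜ)) = Set.univ
  exact h2

lemma not_forcing_twins {G : SimpleGraph V} {u v : V} (huv : G.Adj u v)
    (htw : ∀ w, w ≠ u → w ≠ v → (G.Adj u w ↔ G.Adj v w)) :
    ¬ IsPSDZeroForcingSet G (({u, v} : Set V)ᶜ) := by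
  have hfix : psdStep G (({u, v} : Set V)ᶜ) = ({u, v} : Set V)ᶜ := by
    rw [psdStep, Set.union_eq_left]
    rintro z ⟨hzS, x, hxS, hxz, hcond⟩
    exfalso
    have hz2 : z = u ∨ z = v := pair_cases hzS
    have hxu : x ≠ u := by intro hh; rw [hh] at hxS; simp at hxS
    have hxv : x ≠ v := by intro hh; rw [hh] at hxS; simp at hxS
    rcases hz2 with hz | hz
    · have hxv' : G.Adj x v := ((htw x hxu hxv).mp (hz ▸ hxz.symm)).symm
      have hvS : v ∉ (({u, v} : Set V)ᶜ : Set V) := by simp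
      have hreach : (G.induce {x | x ∉ (({u, v} : Set V)ᶜ : Set V)}).Reachable
          ⟨v, hvS⟩ ⟨z, hzS⟩ := by
        apply Adj.reachable
        show G.Adj v z
        rw [hz]
        exact huv.symm
      have := hcond v hvS hxv' hreach
      rw [hz] at this
      exact huv.ne this.symm
    · have hxu' : G.Adj x u := ((htw x hxu hxv).mpr (hz ▸ hxz.symm)).symm
      have huS : u ∉ (({u, v} : Set V)ᶜ : Set V) := by simp
      have hreach : (G.induce {x | x ∉ (({u, v} : Set V)ᶜ : Set V)}).Reachable
          ⟨u, huS⟩ ⟨z, hzS⟩ := by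
        apply Adj.reachable
        show G.Adj u z
        rw [hz]
        exact huv
      have := hcond u huS hxu' hreach
      rw [hz] at this
      exact huv.ne this
  have hiter : ∀ n, (psdStep G)^[n] (({u, v} : Set V)ᶜ) = ({u, v} : Set V)ᶜ := by
    intro n
    induction n with
    | zero => rfl
    | succ n ih => rw [Function.iterate_succ_apply', ih, hfix]
  intro hforce
  rw [IsPSDZeroForcingSet] at hforce
  have hu : u ∈ ⋃ n, (psdStep G)^[n] (({u, v} : Set V)ᶜ) := by
    rw [hforce]; trivial
  simp only [Set.mem_iUnion, hiter] at hu
  simp at hu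


/-- For a connected graph `G` on `n` vertices, `F₊(G) = n − 2` iff `G` has a
module consisting of two adjacent vertices. -/
theorem failedPSD_eq_card_sub_two_iff [Fintype V] (G : SimpleGraph V)
    (hG : G.Connected) :
    failedPSD G + 2 = Fintype.card V ↔
      ∃ u v : V, G.Adj u v ∧ ∀ w : V, w ≠ u → w ≠ v → (G.Adj u w ↔ G.Adj v w) := by
  classical
  set F : Set ℕ := {n | ∃ S : Set V, ¬ IsPSDZeroForcingSet G S ∧ S.ncard = n} with hF
  have hfp : failedPSD G = sSup F := rfl
  have hub : ∀ m ∈ F, m ≤ Fintype.card V := by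
    rintro m ⟨S, -, rfl⟩
    calc S.ncard ≤ (Set.univ : Set V).ncard :=
          Set.ncard_le_ncard (Set.subset_univ _) Set.finite_univ
      _ = Fintype.card V := by rw [Set.ncard_univ, Nat.card_eq_fintype_card]
  have hbdd : BddAbove F := ⟨Fintype.card V, hub⟩
  constructor
  · intro h
    have hN2 : 2 ≤ Fintype.card V := by omega
    have hadj : ∀ y, ∃ z, G.Adj y z := exists_adj_of_connected hG (by omega)
    by_cases hN3 : Fintype.card V = 2
    · obtain ⟨u⟩ := hG.nonempty
      obtain ⟨v, huv⟩ := hadj u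
      refine ⟨u, v, huv, ?_⟩
      intro w hwu hwv
      exfalso
      have h3 : ({u, v, w} : Finset V).card = 3 := by
        rw [Finset.card_insert_of_notMem (by simp [huv.ne, Ne.symm hwu]),
          Finset.card_insert_of_notMem (by simp [Ne.symm hwv]),
          Finset.card_singleton]
      have hle := Finset.card_le_univ ({u, v, w} : Finset V)
      rw [h3, hN3] at hle
      omega
    · have hNe : F.Nonempty := by
        by_contra hne
        rw [Set.not_nonempty_iff_eq_empty] at hne
        rw [hfp, hne] at h
        simp at h
        omega
      have hmem := Nat.sSup_mem hNe hbdd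
      have hval : sSup F = Fintype.card V - 2 := by omega
      rw [hval] at hmem
      obtain ⟨S, hSnf, hScard⟩ := hmem
      have hcompl : Sᶜ.ncard = 2 := by
        have hsum := Set.ncard_add_ncard_compl S
        rw [Nat.card_eq_fintype_card] at hsum
        omega
      obtain ⟨u, v, huvne, hSc⟩ := Set.ncard_eq_two.mp hcompl
      have hSeq : S = (({u, v} : Set V)ᶜ : Set V) := by rw [← hSc, compl_compl]
      rw [hSeq] at hSnf
      have hadjuv : G.Adj u v := by
        by_contra hnadj
        obtain ⟨x, hxadj⟩ := hadj u
        have hxu : x ≠ u := hxadj.ne'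
        have hxv : x ≠ v := fun hh => hnadj (hh ▸ hxadj)
        exact hSnf (forcing_pair hadj huvne hxu hxv hxadj.symm (Or.inr hnadj))
      refine ⟨u, v, hadjuv, ?_⟩
      intro w hwu hwv
      by_cases hA : G.Adj u w
      · constructor
        · intro _
          by_contra hB
          exact hSnf (forcing_pair hadj huvne hwu hwv hA.symm
            (Or.inl fun hh => hB hh.symm))
        · intro _; exact hA
      · constructor
        · intro hh; exact absurd hh hA
        · intro hB
          exfalso
          rw [Set.pair_comm] at hSnf
          exact hSnf (forcing_pair hadj huvne.symm hwv hwu hB.symm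
            (Or.inl fun hh => hA hh.symm))
  · rintro ⟨u, v, huv, htw⟩
    have hntriv : Nontrivial V := ⟨u, v, huv.ne⟩
    have hN2 : 2 ≤ Fintype.card V := Fintype.one_lt_card_iff_nontrivial.mpr hntriv
    have hadjall : ∀ y, ∃ z, G.Adj y z := exists_adj_of_connected hG (by omega)
    have hcard : (({u, v} : Set V)ᶜ : Set V).ncard = Fintype.card V - 2 := by
      have h2 : ({u, v} : Set V).ncard = 2 := Set.ncard_pair huv.ne
      have hsum := Set.ncard_add_ncard_compl ({u, v} : Set V)
      rw [Nat.card_eq_fintype_card] at hsum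
      omega
    have hmem : (Fintype.card V - 2) ∈ F :=
      ⟨(({u, v} : Set V)ᶜ : Set V), not_forcing_twins huv htw, hcard⟩
    have hle : sSup F ≤ Fintype.card V - 2 := by
      apply csSup_le ⟨_, hmem⟩
      rintro m ⟨S, hSnf, rfl⟩
      by_contra hgt
      push_neg at hgt
      have hsum := Set.ncard_add_ncard_compl S
      rw [Nat.card_eq_fintype_card] at hsum
      have hSle : S.ncard ≤ Fintype.card V := by omega
      have hc1 : Sᶜ.ncard ≤ 1 := by omega
      apply hSnf
      apply forcing_of_iterate 1
      show psdStep G S = Set.univ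
      apply psdStep_eq_univ hadjall
      intro a b ha hb
      exact (Set.ncard_le_one (Set.toFinite _)).mp hc1 a ha b hb
    have hge : Fintype.card V - 2 ≤ sSup F := le_csSup hbdd hmem
    rw [hfp]
    omega
end

section
/- For the complete graph K_n with n ≥ 2, F_+(K_n) = n − 2. -/
open SimpleGraph

variable {V : Type*}

/-!
In `Kₙ` the white vertices form a single white component and each is adjacent to every blue
vertex, so a blue vertex can force only when exactly one vertex is white; with two or more white
vertices the coloring never changes. Hence the sets that fail are exactly those missing at least
two vertices, and their sizes are `0, …, n - 2`.
-/

theorem not_isPSDZeroForcingSet_of_psdStep_eq_self {G : SimpleGraph V} {S : Set V}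
    (hfix : psdStep G S = S) (hS : S ≠ Set.univ) : ¬ IsPSDZeroForcingSet G S := by
  rw [IsPSDZeroForcingSet]
  simpa only [Function.iterate_fixed hfix, Set.iUnion_const] using hS

theorem isPSDZeroForcingSet_of_psdStep_eq_univ {G : SimpleGraph V} {S : Set V}
    (h : psdStep G S = Set.univ) : IsPSDZeroForcingSet G S :=
  Set.eq_univ_of_univ_subset (h ▸ Set.subset_iUnion (fun k => (psdStep G)^[k] S) 1)

theorem psdStep_top_eq_self {S : Set V} (hS : Sᶜ.Nontrivial) :
    psdStep (⊤ : SimpleGraph V) S = S := by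
  refine Set.union_eq_left.mpr fun v ⟨hv, u, hu, _, hforce⟩ => ?_
  obtain ⟨w, hw, hwv⟩ := hS.exists_ne v
  have huw : (⊤ : SimpleGraph V).Adj u w := fun h => hw (h ▸ hu)
  have hwv_adj : ((⊤ : SimpleGraph V).induce {x | x ∉ S}).Adj ⟨w, hw⟩ ⟨v, hv⟩ := hwv
  exact absurd (hforce w hw huw hwv_adj.reachable) hwv

theorem psdStep_top_eq_univ {S : Set V} (hS : S.Nonempty) (hSc : Sᶜ.Subsingleton) :
    psdStep (⊤ : SimpleGraph V) S = Set.univ := by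
  refine Set.eq_univ_of_forall fun v => (em (v ∈ S)).elim Or.inl fun hv => Or.inr ?_
  obtain ⟨u, hu⟩ := hS
  exact ⟨hv, u, hu, fun h => hv (h ▸ hu), fun w hw _ _ => hSc hw hv⟩

theorem isPSDZeroForcingSet_top_iff [Nontrivial V] {S : Set V} :
    IsPSDZeroForcingSet (⊤ : SimpleGraph V) S ↔ Sᶜ.Subsingleton := by
  refine ⟨fun hS => ?_, fun hSc => ?_⟩
  · by_contra hSc
    have hSc := Set.not_subsingleton_iff.mp hSc
    exact not_isPSDZeroForcingSet_of_psdStep_eq_self (psdStep_top_eq_self hSc)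
      (fun h => by simp [h] at hSc) hS
  · have hS : S.Nonempty := by
      by_contra hS
      rw [Set.not_nonempty_iff_eq_empty.mp hS, Set.compl_empty] at hSc
      exact Set.not_subsingleton_iff.mpr Set.nontrivial_univ hSc
    exact isPSDZeroForcingSet_of_psdStep_eq_univ (psdStep_top_eq_univ hS hSc)

/-- For `n ≥ 2`, `F₊(Kₙ) = n − 2`. -/
theorem failedPSD_completeGraph (n : ℕ) (hn : 2 ≤ n) :
    failedPSD (⊤ : SimpleGraph (Fin n)) = n - 2 := by
  have : Nontrivial (Fin n) := Fin.nontrivial_iff_two_le.mpr hn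
  have hcompl (S : Set (Fin n)) : S.ncard + Sᶜ.ncard = n := by
    simpa using Set.ncard_add_ncard_compl S
  have hsizes : {k | ∃ S : Set (Fin n), ¬ IsPSDZeroForcingSet ⊤ S ∧ S.ncard = k}
      = Set.Iic (n - 2) := by
    ext k
    simp only [isPSDZeroForcingSet_top_iff, ← Set.ncard_le_one_iff_subsingleton, not_le,
      Set.mem_ofPred_eq, Set.mem_Iic]
    constructor
    · rintro ⟨S, hSc, rfl⟩
      have := hcompl S
      omega
    · intro hk
      obtain ⟨S, -, hS⟩ := Set.exists_subset_card_eq (s := (Set.univ : Set (Fin n))) (n := k)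
        (by simp only [Set.ncard_univ, Nat.card_eq_fintype_card, Fintype.card_fin]; omega)
      exact ⟨S, by have := hcompl S; omega, hS⟩
  rw [failedPSD, hsizes, csSup_Iic]
end

section
/- For a finite simple graph G, F_+(G) = 0 if and only if G is a tree. -/
open SimpleGraph

variable {V : Type*}

/-!
In a forest every edge is a bridge. So whenever the blue set is nonempty and proper, a blue
endpoint `u` of a boundary edge `uv` forces `v`: every other white neighbour of `u` lies on the far
side of the bridge, hence not in the white component of `v`. On a finite connected forest the
iteration therefore colours everything from any nonempty set.

Conversely, a single vertex only ever colours its own component, which gives connectivity. If `x`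
lies on a cycle through its neighbours `y` and `z`, the vertices reachable from `y` avoiding `x`
form a connected set `K` whose only outside neighbour `x` has the two neighbours `y`, `z` in `K`;
no vertex of `K` can ever be forced from `{x}`.
-/

namespace SimpleGraph

variable {G : SimpleGraph V}

lemma preconnected_induce_setOf_walk_notMem_support (x y : V) :
    (G.induce {w | ∃ q : G.Walk y w, x ∉ q.support}).Preconnected := by
  classical
  have hsupp {w : V} (q : G.Walk y w) (hq : x ∉ q.support) :
      ∀ t ∈ q.support, t ∈ {w | ∃ q : G.Walk y w, x ∉ q.support} :=
    fun t ht => ⟨q.takeUntil t ht, fun hx => hq (q.support_takeUntil_subset_support ht hx)⟩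
  rintro ⟨a, qa, hqa⟩ ⟨b, qb, hqb⟩
  exact ((qa.induce _ (hsupp qa hqa)).reachable.symm.trans (qb.induce _ (hsupp qb hqb)).reachable)

lemma exists_adj_adj_walk_of_not_isAcyclic (h : ¬ G.IsAcyclic) :
    ∃ x y z, G.Adj x y ∧ G.Adj x z ∧ y ≠ z ∧ ∃ p : G.Walk z y, x ∉ p.support := by
  classical
  obtain ⟨x, y, hxy, hbridge⟩ : ∃ x y, G.Adj x y ∧ ¬ G.IsBridge s(x, y) := by
    simpa [isAcyclic_iff_forall_adj_isBridge] using h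
  obtain ⟨p, hp⟩ : ∃ p : G.Walk x y, s(x, y) ∉ p.edges := by
    simpa [isBridge_iff_forall_walk_mem_edges] using hbridge
  obtain ⟨z, hxz, r, hr⟩ := Walk.exists_eq_cons_of_ne hxy.ne p.bypass
  have hpath : (Walk.cons hxz r).IsPath := hr ▸ p.bypass_isPath
  have hedges : s(x, y) ∉ (Walk.cons hxz r).edges :=
    hr ▸ fun he => hp (p.edges_bypass_subset_edges he)
  refine ⟨x, y, z, hxy, hxz, fun hyz => hedges ?_, r, (Walk.cons_isPath_iff _ _).mp hpath |>.2⟩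
  simp [hyz]

end SimpleGraph

section PSDForcing

variable {G : SimpleGraph V}

variable (G) in
lemma subset_psdStep (B : Set V) : B ⊆ psdStep G B := Set.subset_union_left

variable (G) in
lemma monotone_iterate_psdStep (S : Set V) : Monotone fun n => (psdStep G)^[n] S :=
  monotone_nat_of_le_succ fun n => by
    simpa only [Function.iterate_succ_apply'] using subset_psdStep G _

lemma isPSDZeroForcingSet_of_forall_psdStep_eq [Finite V] {S : Set V}
    (h : ∀ B, S ⊆ B → psdStep G B = B → B = Set.univ) : IsPSDZeroForcingSet G S := by
  obtain ⟨n, hn⟩ := WellFoundedGT.monotone_chain_condition ⟨_, monotone_iterate_psdStep G S⟩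
  have hfix : psdStep G ((psdStep G)^[n] S) = (psdStep G)^[n] S := by
    rw [← Function.iterate_succ_apply' (psdStep G)]
    exact (hn (n + 1) n.le_succ).symm
  have hS : S ⊆ (psdStep G)^[n] S := monotone_iterate_psdStep G S n.zero_le
  exact Set.eq_univ_of_univ_subset <|
    h _ hS hfix ▸ Set.subset_iUnion (fun k => (psdStep G)^[k] S) n

lemma failedPSD_eq_zero_iff [Finite V] :
    failedPSD G = 0 ↔ ∀ S : Set V, S.Nonempty → IsPSDZeroForcingSet G S := by
  have hbdd : BddAbove {n | ∃ S : Set V, ¬ IsPSDZeroForcingSet G S ∧ S.ncard = n} :=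
    ⟨Nat.card V, by rintro _ ⟨S, -, rfl⟩; exact Set.ncard_le_card S⟩
  constructor
  · intro h0 S hS
    by_contra hS_fail
    have := le_csSup hbdd ⟨S, hS_fail, rfl⟩
    rw [← failedPSD, h0] at this
    exact hS.ncard_pos.ne' (Nat.le_zero.mp this)
  · intro h
    refine Nat.le_zero.mp (csSup_le' ?_)
    rintro _ ⟨S, hS_fail, rfl⟩
    rw [Set.not_nonempty_iff_eq_empty.mp (mt (h S) hS_fail), Set.ncard_empty]

lemma iterate_psdStep_singleton_subset (v : V) (n : ℕ) :
    (psdStep G)^[n] {v} ⊆ {w | G.Reachable v w} := by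
  induction n with
  | zero => exact Set.singleton_subset_iff.mpr (Reachable.refl v)
  | succ n ih =>
    rw [Function.iterate_succ_apply']
    rintro w (hw | ⟨-, u, hu, huw, -⟩)
    · exact ih hw
    · exact (ih hu).trans huw.reachable

lemma preconnected_of_forall_isPSDZeroForcingSet_singleton
    (h : ∀ v, IsPSDZeroForcingSet G {v}) : G.Preconnected := by
  intro v w
  obtain ⟨n, hn⟩ := Set.mem_iUnion.mp ((h v).symm ▸ Set.mem_univ w)
  exact iterate_psdStep_singleton_subset v n hn

/-- A vertex `u` that could force into `K` has a second white neighbour in `K`, joined to the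
target inside the white set `K`. -/
lemma disjoint_psdStep {K B : Set V} (hK : (G.induce K).Preconnected)
    (hK_two : ∀ u ∉ K, ∀ v ∈ K, G.Adj u v → ∃ w ∈ K, w ≠ v ∧ G.Adj u w)
    (hBK : Disjoint B K) : Disjoint (psdStep G B) K := by
  refine Set.disjoint_union_left.mpr ⟨hBK, Set.disjoint_left.mpr ?_⟩
  rintro v ⟨hvB, u, hu, huv, hforce⟩ hvK
  obtain ⟨w, hwK, hwv, huw⟩ := hK_two u (Set.disjoint_left.mp hBK hu) v hvK huv
  have hKB : K ≤ {x | x ∉ B} := fun x hx hxB => Set.disjoint_left.mp hBK hxB hx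
  exact hwv <| hforce w (hKB hwK) huw <|
    (hK ⟨w, hwK⟩ ⟨v, hvK⟩).map (G.induceHomOfLE hKB).toHom

lemma not_isPSDZeroForcingSet_of_disjoint {K S : Set V} (hK : (G.induce K).Preconnected)
    (hK_two : ∀ u ∉ K, ∀ v ∈ K, G.Adj u v → ∃ w ∈ K, w ≠ v ∧ G.Adj u w)
    (hK_ne : K.Nonempty) (hSK : Disjoint S K) : ¬ IsPSDZeroForcingSet G S := by
  have hdisj : ∀ n, Disjoint ((psdStep G)^[n] S) K := fun n => by
    induction n with
    | zero => exact hSK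
    | succ n ih =>
      exact Function.iterate_succ_apply' (psdStep G) n S ▸ disjoint_psdStep hK hK_two ih
  intro hS
  obtain ⟨k, hk⟩ := hK_ne
  obtain ⟨n, hn⟩ := Set.mem_iUnion.mp (hS.symm ▸ Set.mem_univ k)
  exact Set.disjoint_left.mp (hdisj n) hn hk

lemma not_isPSDZeroForcingSet_singleton {x y z : V} (hxy : G.Adj x y) (hxz : G.Adj x z)
    (hyz : y ≠ z) (p : G.Walk z y) (hxp : x ∉ p.support) : ¬ IsPSDZeroForcingSet G {x} := by
  set K := {w | ∃ q : G.Walk y w, x ∉ q.support}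
  have hyK : y ∈ K := ⟨.nil, by simpa using hxy.ne⟩
  have hzK : z ∈ K := ⟨p.reverse, by simpa using hxp⟩
  refine not_isPSDZeroForcingSet_of_disjoint (preconnected_induce_setOf_walk_notMem_support x y)
    ?_ ⟨y, hyK⟩ (Set.disjoint_singleton_left.mpr fun ⟨q, hq⟩ => hq q.end_mem_support)
  intro u huK v ⟨q, hq⟩ huv
  obtain rfl : u = x := by
    by_contra hux
    exact huK ⟨q.concat huv.symm, by simpa [Walk.support_concat, hq] using Ne.symm hux⟩
  by_cases hvy : v = y
  · exact ⟨z, hzK, hvy ▸ hyz.symm, hxz⟩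
  · exact ⟨y, hyK, Ne.symm hvy, hxy⟩

lemma mem_psdStep_of_isBridge {B : Set V} {u v : V} (huv : G.Adj u v)
    (hbridge : G.IsBridge s(u, v)) (hu : u ∈ B) (hv : v ∉ B) : v ∈ psdStep G B := by
  refine Or.inr ⟨hv, u, hu, huv, fun w hwB huw hwv => ?_⟩
  by_contra hne
  -- white vertices differ from `u`, so the white subgraph does not use the edge `uv`
  let f : G.induce {x | x ∉ B} →g G.deleteEdges {s(u, v)} :=
    ⟨Subtype.val, fun {a b} hab => deleteEdges_adj.mpr ⟨hab, fun he => by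
      have hu' : u ∈ s(a.1, b.1) := Set.mem_singleton_iff.mp he ▸ Sym2.mem_mk_left u v
      rcases Sym2.mem_iff.mp hu' with rfl | rfl
      exacts [a.2 hu, b.2 hu]⟩⟩
  have huw' : (G.deleteEdges {s(u, v)}).Adj u w :=
    deleteEdges_adj.mpr ⟨huw, by simp [hne, huv.ne]⟩
  exact isBridge_iff.mp hbridge (huw'.reachable.trans (hwv.map f))

lemma isPSDZeroForcingSet_of_isAcyclic [Finite V] (hconn : G.Preconnected) (hac : G.IsAcyclic)
    {S : Set V} (hS : S.Nonempty) : IsPSDZeroForcingSet G S := by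
  refine isPSDZeroForcingSet_of_forall_psdStep_eq fun B hSB hfix => ?_
  by_contra hB
  obtain ⟨c, hc⟩ := (Set.ne_univ_iff_exists_notMem B).mp hB
  obtain ⟨b, hb⟩ := hS.mono hSB
  obtain ⟨d, -, hd, hd'⟩ := (hconn b c).some.exists_boundary_dart B hb hc
  have hbridge := isAcyclic_iff_forall_adj_isBridge.mp hac d.adj
  exact hd' (hfix ▸ mem_psdStep_of_isBridge d.adj hbridge hd hd')

end PSDForcing

/-- `F₊(G) = 0` iff `G` is a tree. -/
theorem failedPSD_eq_zero_iff_isTree [Fintype V] [Nonempty V] (G : SimpleGraph V) :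
    failedPSD G = 0 ↔ G.IsTree := by
  rw [failedPSD_eq_zero_iff]
  constructor
  · intro h
    have hsingle (v : V) : IsPSDZeroForcingSet G {v} := h {v} (Set.singleton_nonempty v)
    refine ⟨⟨preconnected_of_forall_isPSDZeroForcingSet_singleton hsingle⟩, ?_⟩
    by_contra hcyc
    obtain ⟨x, y, z, hxy, hxz, hyz, p, hxp⟩ := exists_adj_adj_walk_of_not_isAcyclic hcyc
    exact not_isPSDZeroForcingSet_singleton hxy hxz hyz p hxp (hsingle x)
  · exact fun hT _ => isPSDZeroForcingSet_of_isAcyclic hT.connected.preconnected hT.isAcyclic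
end
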